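/- Correctness of the SetCover reduction: let U = {a_1, …, a_n} be a finite set, let S_1, …, S_m ⊆ U, let k ∈ ℕ, and let B(U, S_1, …, S_m) be the associated broadcast protocol. Then there exists a subcollection of {S_1, …, S_m} of size at most k whose union is U if and only if there exists a reconfigurable execution of B(U, S_1, …, S_m) covering {☺} with exactly k + 1 nodes, and also if and only if there exists a lossy execution of B(U, S_1, …, S_m) covering {☺} with exactly k + 1 nodes. -/

import Mathlib

/-- A broadcast protocol over finite state set `Q` and finite message alphabet `M`.
`I` is the set of initial states, `br q m q'` means `(q, !!m, q') ∈ Δ` (a broadcast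
transition) and `rcv q m q'` means `(q, ??m, q') ∈ Δ` (a reception transition).
The protocol is complete for receptions. -/
structure BroadcastProtocol (Q M : Type) [Fintype Q] [DecidableEq Q] [Fintype M] where
  I : Finset Q
  br : Q → M → Q → Prop
  rcv : Q → M → Q → Prop
  complete : ∀ q m, ∃ q', rcv q m q'

section Execs
variable {Q M : Type} [Fintype Q] [DecidableEq Q] [Fintype M]

/-- A reconfigurable execution of length `r` over the finite node type `ν`:
`lab i v` is the state of node `v` in the `i`-th configuration, `edges i` is the
(symmetric, irreflexive) communication topology of the `i`-th configuration,
and in the `i`-th step node `sender i` broadcasts message `msg i` to its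
neighbours; the topology may change arbitrarily at each step. -/
structure RExec (P : BroadcastProtocol Q M) (ν : Type) [Fintype ν] [DecidableEq ν]
    (r : ℕ) where
  lab : Fin (r + 1) → ν → Q
  edges : Fin (r + 1) → ν → ν → Prop
  edges_symm : ∀ i, Symmetric (edges i)
  edges_irrefl : ∀ i, Irreflexive (edges i)
  sender : Fin r → ν
  msg : Fin r → M
  init : ∀ v, lab 0 v ∈ P.I
  step_br : ∀ i : Fin r, P.br (lab i.castSucc (sender i)) (msg i) (lab i.succ (sender i))
  step_rcv : ∀ i : Fin r, ∀ v, v ≠ sender i →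
    (edges i.castSucc (sender i) v → P.rcv (lab i.castSucc v) (msg i) (lab i.succ v)) ∧
    (¬ edges i.castSucc (sender i) v → lab i.succ v = lab i.castSucc v)

namespace RExec

variable {P : BroadcastProtocol Q M} {ν : Type} [Fintype ν] [DecidableEq ν] {r : ℕ}

/-- Labelling of the last configuration. -/
def lastLab (ρ : RExec P ν r) : ν → Q := ρ.lab (Fin.last r)

/-- The execution covers `F` if a node of the last configuration is labelled in `F`. -/
def Covers (ρ : RExec P ν r) (F : Set Q) : Prop := ∃ v, ρ.lastLab v ∈ F

/-- The active length of node `v`: the number of steps in which `v` broadcasts. -/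
def activeLen (ρ : RExec P ν r) (v : ν) : ℕ :=
  (Finset.univ.filter fun i : Fin r => ρ.sender i = v).card

end RExec

/-- A lossy execution of length `r` over the finite node type `ν`: the communication
topology `E` is fixed throughout, and in the `i`-th step node `sender i` broadcasts
message `msg i`, which is lost (reaching no node) iff `lost i = true`. -/
structure LExec (P : BroadcastProtocol Q M) (ν : Type) [Fintype ν] [DecidableEq ν]
    (r : ℕ) where
  lab : Fin (r + 1) → ν → Q
  E : ν → ν → Prop
  E_symm : Symmetric E
  E_irrefl : Irreflexive E
  sender : Fin r → ν
  msg : Fin r → M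
  lost : Fin r → Bool
  init : ∀ v, lab 0 v ∈ P.I
  step_br : ∀ i : Fin r, P.br (lab i.castSucc (sender i)) (msg i) (lab i.succ (sender i))
  step_lost : ∀ i : Fin r, lost i = true → ∀ v, v ≠ sender i →
    lab i.succ v = lab i.castSucc v
  step_real : ∀ i : Fin r, lost i = false → ∀ v, v ≠ sender i →
    (E (sender i) v → P.rcv (lab i.castSucc v) (msg i) (lab i.succ v)) ∧
    (¬ E (sender i) v → lab i.succ v = lab i.castSucc v)

namespace LExec

variable {P : BroadcastProtocol Q M} {ν : Type} [Fintype ν] [DecidableEq ν] {r : ℕ}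

/-- Labelling of the last configuration. -/
def lastLab (ρ : LExec P ν r) : ν → Q := ρ.lab (Fin.last r)

/-- The execution covers `F` if a node of the last configuration is labelled in `F`. -/
def Covers (ρ : LExec P ν r) (F : Set Q) : Prop := ∃ v, ρ.lastLab v ∈ F

/-- The active length of node `v`: the number of broadcasts (lost or not) of `v`. -/
def activeLen (ρ : LExec P ν r) (v : ν) : ℕ :=
  (Finset.univ.filter fun i : Fin r => ρ.sender i = v).card

/-- The real active length of node `v`: the number of non-lost broadcasts of `v`. -/
def realActiveLen (ρ : LExec P ν r) (v : ν) : ℕ :=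
  (Finset.univ.filter fun i : Fin r => ρ.sender i = v ∧ ρ.lost i = false).card

end LExec

end Execs
/- ## The SetCover protocol -/

abbrev SCQ (n m : ℕ) := Fin m ⊕ (Fin n ⊕ Unit)

def SCBr (n m : ℕ) (S : Fin m → Finset (Fin n)) : SCQ n m → Fin n → SCQ n m → Prop
  | .inl j, a, q' => a ∈ S j ∧ q' = .inl j
  | _, _, _ => False

def SCRcvF (n m : ℕ) (q : SCQ n m) (a : Fin n) : SCQ n m :=
  match q with
  | .inr (.inl i) =>
      if (a : ℕ) = (i : ℕ) then
        if h : (i : ℕ) + 1 < n then .inr (.inl ⟨(i : ℕ) + 1, h⟩) else .inr (.inr ())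
      else .inr (.inl i)
  | q => q

def SCProt (n m : ℕ) (hn : 0 < n) (S : Fin m → Finset (Fin n)) :
    BroadcastProtocol (SCQ n m) (Fin n) where
  I := (Finset.univ.image (Sum.inl : Fin m → SCQ n m)) ∪ {Sum.inr (Sum.inl ⟨0, hn⟩)}
  br := SCBr n m S
  rcv := fun q a q' => q' = SCRcvF n m q a
  complete := fun q a => ⟨SCRcvF n m q a, rfl⟩

def SCSmiley (n m : ℕ) : SCQ n m := Sum.inr (Sum.inr ())

/-
In `B(U, S_1, …, S_m)` the set states never change and the chain states never
broadcast, so the only messages ever sent are elements of the sets initially held by some node,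
and a chain node only advances from `q_i` to `q_{i+1}` on receiving `a_i`. A node reaching `☺` has
therefore received all of `a_1, …, a_n`, and it occupies one of the `k + 1` nodes, so at most `k`
sets are held. Conversely, given a cover by `k` sets, put one set on each of `k` nodes and `q_1` on
one more node; the set nodes broadcast `a_1, …, a_n` in order to everyone over the complete graph, which
is both a reconfigurable and a lossy execution.
-/

open Finset

section Runs

variable {Q M : Type} [Fintype Q] [DecidableEq Q] [Fintype M]

/-- An execution in which every broadcast reaches an arbitrary subset of the other nodes. Both
reconfigurable and lossy executions are runs, and a flooding run is an execution of both kinds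
over the complete graph. -/
structure BroadcastProtocol.Run (P : BroadcastProtocol Q M) (ν : Type) (r : ℕ) where
  lab : Fin (r + 1) → ν → Q
  sender : Fin r → ν
  msg : Fin r → M
  init : ∀ v, lab 0 v ∈ P.I
  step_br : ∀ i : Fin r, P.br (lab i.castSucc (sender i)) (msg i) (lab i.succ (sender i))
  step_rcv : ∀ i : Fin r, ∀ v, v ≠ sender i →
    P.rcv (lab i.castSucc v) (msg i) (lab i.succ v) ∨ lab i.succ v = lab i.castSucc v

namespace BroadcastProtocol.Run

variable {P : BroadcastProtocol Q M} {ν : Type} {r : ℕ}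

def IsFlooding (ρ : P.Run ν r) : Prop :=
  ∀ i : Fin r, ∀ v, v ≠ ρ.sender i → P.rcv (ρ.lab i.castSucc v) (ρ.msg i) (ρ.lab i.succ v)

variable [Fintype ν] [DecidableEq ν]

def toRExec (ρ : P.Run ν r) (hρ : ρ.IsFlooding) : RExec P ν r where
  lab := ρ.lab
  edges _ := (· ≠ ·)
  edges_symm _ _ _ := Ne.symm
  edges_irrefl _ _ := (· rfl)
  sender := ρ.sender
  msg := ρ.msg
  init := ρ.init
  step_br := ρ.step_br
  step_rcv i v hv := ⟨fun _ => hρ i v hv, fun h => absurd hv.symm h⟩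

def toLExec (ρ : P.Run ν r) (hρ : ρ.IsFlooding) : LExec P ν r where
  lab := ρ.lab
  E := (· ≠ ·)
  E_symm _ _ := Ne.symm
  E_irrefl _ := (· rfl)
  sender := ρ.sender
  msg := ρ.msg
  lost _ := false
  init := ρ.init
  step_br := ρ.step_br
  step_lost _ h := nomatch h
  step_real i _ v hv := ⟨fun _ => hρ i v hv, fun h => absurd hv.symm h⟩

end BroadcastProtocol.Run

variable {P : BroadcastProtocol Q M} {ν : Type} [Fintype ν] [DecidableEq ν] {r : ℕ}

def RExec.toRun (ρ : RExec P ν r) : P.Run ν r where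
  lab := ρ.lab
  sender := ρ.sender
  msg := ρ.msg
  init := ρ.init
  step_br := ρ.step_br
  step_rcv i v hv := by
    by_cases he : ρ.edges i.castSucc (ρ.sender i) v
    · exact .inl ((ρ.step_rcv i v hv).1 he)
    · exact .inr ((ρ.step_rcv i v hv).2 he)

def LExec.toRun (ρ : LExec P ν r) : P.Run ν r where
  lab := ρ.lab
  sender := ρ.sender
  msg := ρ.msg
  init := ρ.init
  step_br := ρ.step_br
  step_rcv i v hv := by
    cases hl : ρ.lost i with
    | true => exact .inr (ρ.step_lost i hl v hv)
    | false =>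
      by_cases he : ρ.E (ρ.sender i) v
      · exact .inl ((ρ.step_real i hl v hv).1 he)
      · exact .inr ((ρ.step_real i hl v hv).2 he)

end Runs

theorem Finset.exists_fin_range_superset {α : Type*} {C : Finset α} {k : ℕ} (hC : C.Nonempty)
    (hk : C.card ≤ k) : ∃ g : Fin k → α, ↑C ⊆ Set.range g := by
  obtain ⟨j₀, -⟩ := hC
  refine ⟨fun u => C.toList.getD u j₀, fun j hj => ?_⟩
  obtain ⟨u, hu, rfl⟩ := List.mem_iff_getElem.1 (Finset.mem_toList.2 hj)
  exact ⟨⟨u, (C.length_toList ▸ hu).trans_le hk⟩, List.getD_eq_getElem _ _ hu⟩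

theorem Finset.card_preimage_inl_image_lt {ν α β : Type*} [Fintype ν] [DecidableEq (α ⊕ β)]
    {f : ν → α ⊕ β} {v₀ : ν} (hv₀ : (f v₀).isRight) :
    ((univ.image f).preimage Sum.inl Sum.inl_injective.injOn).card < Fintype.card ν := by
  have hmaps : Set.MapsTo (Sum.inl : α → α ⊕ β)
      ↑((univ.image f).preimage Sum.inl Sum.inl_injective.injOn) ↑((univ.image f).erase (f v₀)) :=
    fun a ha => mem_erase.2 ⟨fun (h : Sum.inl a = f v₀) => by simp [← h] at hv₀, mem_preimage.1 ha⟩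
  calc _ ≤ ((univ.image f).erase (f v₀)).card :=
        card_le_card_of_injOn _ hmaps Sum.inl_injective.injOn
    _ < (univ.image f).card := card_erase_lt_of_mem (mem_image_of_mem f (mem_univ v₀))
    _ ≤ Fintype.card ν := card_image_le

section SetCover

variable {n m : ℕ}

/-- `SCCounter n m p` is the chain state `q_{p+1}` for `p < n`, and `☺` otherwise. -/
def SCCounter (n m p : ℕ) : SCQ n m :=
  if h : p < n then .inr (.inl ⟨p, h⟩) else SCSmiley n m

theorem SCCounter_zero (hn : 0 < n) : SCCounter n m 0 = .inr (.inl ⟨0, hn⟩) :=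
  dif_pos hn

theorem SCCounter_eq_smiley_iff {p : ℕ} : SCCounter n m p = SCSmiley n m ↔ n ≤ p := by
  unfold SCCounter
  split_ifs with h
  · simp [SCSmiley, h]
  · simpa [SCSmiley] using h

theorem SCCounter_ne_inl (p : ℕ) (j : Fin m) : SCCounter n m p ≠ .inl j := by
  unfold SCCounter SCSmiley
  split_ifs <;> simp

theorem SCRcvF_counter (p : ℕ) (a : Fin n) :
    SCRcvF n m (SCCounter n m p) a = SCCounter n m (if (a : ℕ) = p then p + 1 else p) := by
  unfold SCCounter
  by_cases hp : p < n
  · by_cases ha : (a : ℕ) = p <;> simp [SCRcvF, SCSmiley, hp, ha]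
  · have ha : (a : ℕ) ≠ p := by omega
    simp [hp, ha, SCSmiley, SCRcvF]

theorem SCRcvF_eq_inl_iff {q : SCQ n m} {a : Fin n} {j : Fin m} :
    SCRcvF n m q a = .inl j ↔ q = .inl j := by
  rcases q with _ | i | _
  · rfl
  · simp only [SCRcvF]
    split_ifs <;> simp
  · simp [SCRcvF]

theorem SCBr.exists_eq_inl {S : Fin m → Finset (Fin n)} {q q' : SCQ n m} {a : Fin n}
    (h : SCBr n m S q a q') : ∃ j, q = .inl j ∧ q' = .inl j ∧ a ∈ S j := by
  rcases q with j | _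
  · exact ⟨j, rfl, h.2, h.1⟩
  · exact h.elim

namespace SCProt

variable {hn : 0 < n} {S : Fin m → Finset (Fin n)} {ν : Type} {r : ℕ}
  (ρ : (SCProt n m hn S).Run ν r)

theorem lab_succ_eq_inl_iff (i : Fin r) (v : ν) (j : Fin m) :
    ρ.lab i.succ v = .inl j ↔ ρ.lab i.castSucc v = .inl j := by
  by_cases hv : v = ρ.sender i
  · subst hv
    obtain ⟨j', h, h', -⟩ := (ρ.step_br i).exists_eq_inl
    rw [h, h']
  · rcases ρ.step_rcv i v hv with h | h <;> rw [h]
    exact SCRcvF_eq_inl_iff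

theorem lab_eq_inl_iff (i : Fin (r + 1)) (v : ν) (j : Fin m) :
    ρ.lab i v = .inl j ↔ ρ.lab 0 v = .inl j := by
  induction i using Fin.induction with
  | zero => rfl
  | succ i ih => rw [lab_succ_eq_inl_iff, ih]

noncomputable def initialSets [Fintype ν] : Finset (Fin m) :=
  (univ.image (ρ.lab 0)).preimage Sum.inl Sum.inl_injective.injOn

theorem exists_mem_initialSets_msg_mem [Fintype ν] (i : Fin r) :
    ∃ j ∈ initialSets ρ, ρ.msg i ∈ S j := by
  obtain ⟨j, h, -, hj⟩ := (ρ.step_br i).exists_eq_inl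
  refine ⟨j, mem_preimage.2 (mem_image.2 ⟨ρ.sender i, mem_univ _, ?_⟩), hj⟩
  exact (lab_eq_inl_iff ρ _ _ _).1 h

theorem lab_zero_eq_counter_of_lab_last_eq_smiley {v : ν}
    (hv : ρ.lab (Fin.last r) v = SCSmiley n m) : ρ.lab 0 v = SCCounter n m 0 := by
  have hI := ρ.init v
  simp only [SCProt, mem_union, mem_image, mem_univ, true_and, mem_singleton] at hI
  rcases hI with ⟨j, hj⟩ | h
  · have := (lab_eq_inl_iff ρ (Fin.last r) v j).2 hj.symm
    simp [hv, SCSmiley] at this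
  · rw [h, SCCounter_zero hn]

theorem exists_lab_eq_counter {v : ν} (hv : ρ.lab 0 v = SCCounter n m 0) (i : Fin (r + 1)) :
    ∃ p, ρ.lab i v = SCCounter n m p ∧ ∀ a : Fin n, (a : ℕ) < p → a ∈ Set.range ρ.msg := by
  induction i using Fin.induction with
  | zero => exact ⟨0, hv, fun a ha => absurd ha (Nat.not_lt_zero _)⟩
  | succ i ih =>
    obtain ⟨p, hp, hrange⟩ := ih
    have hsender : v ≠ ρ.sender i := by
      rintro rfl
      obtain ⟨j, h, -⟩ := (ρ.step_br i).exists_eq_inl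
      exact SCCounter_ne_inl p j (hp ▸ h)
    rcases ρ.step_rcv i v hsender with h | h
    · refine ⟨_, (h.trans (by rw [hp])).trans (SCRcvF_counter p (ρ.msg i)), ?_⟩
      split_ifs with hmsg
      · intro a ha
        rcases Nat.lt_succ_iff_lt_or_eq.1 ha with ha | ha
        · exact hrange a ha
        · exact ⟨i, Fin.ext (hmsg.trans ha.symm)⟩
      · exact hrange
    · exact ⟨p, h.trans hp, hrange⟩

theorem exists_cover_of_lab_last_eq_smiley [Fintype ν] {v : ν}
    (hv : ρ.lab (Fin.last r) v = SCSmiley n m) :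
    ∃ C : Finset (Fin m), C.card < Fintype.card ν ∧ ∀ a : Fin n, ∃ j ∈ C, a ∈ S j := by
  have hv₀ := lab_zero_eq_counter_of_lab_last_eq_smiley ρ hv
  have hright : (ρ.lab 0 v).isRight := by rw [hv₀, SCCounter_zero hn]; rfl
  refine ⟨initialSets ρ, card_preimage_inl_image_lt hright, fun a => ?_⟩
  obtain ⟨p, hp, hrange⟩ := exists_lab_eq_counter ρ hv₀ (Fin.last r)
  have hnp : n ≤ p := SCCounter_eq_smiley_iff.1 (hp ▸ hv)
  obtain ⟨i, rfl⟩ := hrange a (a.isLt.trans_le hnp)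
  exact exists_mem_initialSets_msg_mem ρ i

variable (hn S) {k : ℕ}

def coverLab (g : Fin k → Fin m) (i : Fin (n + 1)) : Fin (k + 1) → SCQ n m :=
  Fin.cases (SCCounter n m i) fun u => .inl (g u)

theorem coverLab_succ (g : Fin k → Fin m) (i : Fin n) (v : Fin (k + 1)) :
    coverLab g i.succ v = SCRcvF n m (coverLab g i.castSucc v) i := by
  cases v using Fin.cases with
  | zero =>
    show SCCounter n m (i + 1) = SCRcvF n m (SCCounter n m i) i
    rw [SCRcvF_counter, if_pos rfl]
  | succ u => rfl

def coverRun (g : Fin k → Fin m) (holder : Fin n → Fin k) (hholder : ∀ a, a ∈ S (g (holder a))) :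
    (SCProt n m hn S).Run (Fin (k + 1)) n where
  lab := coverLab g
  sender i := (holder i).succ
  msg i := i
  init v := by
    cases v using Fin.cases with
    | zero => simp [coverLab, SCProt, SCCounter_zero hn]
    | succ u => simp [coverLab, SCProt]
  step_br i := ⟨hholder i, rfl⟩
  step_rcv i v _ := .inl (coverLab_succ g i v)

theorem exists_isFlooding_of_cover {C : Finset (Fin m)} (hCk : C.card ≤ k)
    (hcov : ∀ a : Fin n, ∃ j ∈ C, a ∈ S j) :
    ∃ ρ : (SCProt n m hn S).Run (Fin (k + 1)) n,
      ρ.IsFlooding ∧ ρ.lab (Fin.last n) 0 = SCSmiley n m := by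
  obtain ⟨j, hj, -⟩ := hcov ⟨0, hn⟩
  obtain ⟨g, hg⟩ := exists_fin_range_superset ⟨j, hj⟩ hCk
  have hholder : ∀ a, ∃ u, a ∈ S (g u) := fun a => by
    obtain ⟨j, hj, ha⟩ := hcov a
    obtain ⟨u, rfl⟩ := hg hj
    exact ⟨u, ha⟩
  choose holder hholder using hholder
  exact ⟨coverRun hn S g holder hholder, fun i v _ => coverLab_succ g i v,
    SCCounter_eq_smiley_iff.2 le_rfl⟩

end SCProt

end SetCover

/-- **Correctness of the SetCover reduction.** For `U = Fin n` (with `n ≥ 1`, so that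
the initial state `q_1` exists) and subsets `S 0, …, S (m-1) ⊆ U`: there is a
subcollection of at most `k` of the sets whose union is `U` iff there is a
reconfigurable execution of the associated protocol covering `{☺}` with exactly
`k + 1` nodes, and also iff there is a lossy execution of the associated protocol
covering `{☺}` with exactly `k + 1` nodes. -/
theorem setcover_reduction (n m k : ℕ) (hn : 0 < n) (S : Fin m → Finset (Fin n)) :
    ((∃ C : Finset (Fin m), C.card ≤ k ∧ ∀ a : Fin n, ∃ j ∈ C, a ∈ S j) ↔
      ∃ (r : ℕ) (ρ : RExec (SCProt n m hn S) (Fin (k + 1)) r),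
        ρ.Covers {SCSmiley n m}) ∧
    ((∃ C : Finset (Fin m), C.card ≤ k ∧ ∀ a : Fin n, ∃ j ∈ C, a ∈ S j) ↔
      ∃ (r : ℕ) (ρ : LExec (SCProt n m hn S) (Fin (k + 1)) r),
        ρ.Covers {SCSmiley n m}) := by
  have cover_of_run : ∀ {r} (ρ : (SCProt n m hn S).Run (Fin (k + 1)) r) (v : Fin (k + 1)),
      ρ.lab (Fin.last r) v = SCSmiley n m →
      ∃ C : Finset (Fin m), C.card ≤ k ∧ ∀ a : Fin n, ∃ j ∈ C, a ∈ S j := fun ρ v hv => by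
    obtain ⟨C, hC, hcov⟩ := SCProt.exists_cover_of_lab_last_eq_smiley ρ hv
    exact ⟨C, by simpa [Nat.lt_succ_iff] using hC, hcov⟩
  refine ⟨⟨fun ⟨C, hCk, hcov⟩ => ?_, fun ⟨r, ρ, v, hv⟩ => cover_of_run ρ.toRun v hv⟩,
    ⟨fun ⟨C, hCk, hcov⟩ => ?_, fun ⟨r, ρ, v, hv⟩ => cover_of_run ρ.toRun v hv⟩⟩
  all_goals obtain ⟨ρ, hρ, hlast⟩ := SCProt.exists_isFlooding_of_cover hn S hCk hcov
  · exact ⟨n, ρ.toRExec hρ, 0, hlast⟩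
  · exact ⟨n, ρ.toLExec hρ, 0, hlast⟩
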